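/- Let n ≥ 2 and 0 ≤ ℓ' ≤ ℓ be integers with gcd(ℓ'+1, ℓ+2) > 1. Then Q_{n,ℓ,ℓ'}(z_1,…,z_{2n−2}) = 0 identically; that is, the determinant det( [coefficient of x^i y^j in s_{λ_{n,ℓ,ℓ'}}(z_1,…,z_{2n−2},x,y)] )_{0≤i,j≤ℓ(n−1)+ℓ'} vanishes identically as an element of ℂ[z_1,…,z_{2n−2}]. -/

import Mathlib

/-!
Let `d = gcd(ℓ'+1, ℓ+2)`, `ω` a primitive `d`-th root of unity and `c = ω z₁`. Each shifted
exponent `λ_j + 2n - j` equals `(n - ⌈j/2⌉)(ℓ+2)` plus `ℓ'+1` or `0`, so it is divisible by `d`;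
hence at `y = c` the rows of `z₁` and `y` in `Δ_λ` coincide and `Δ_λ` vanishes, while `Δ` does
not, so `S(z, x, c) = 0`. Comparing `y`-degrees in `Δ_λ = S Δ` bounds the `y`-degree of `S` by
`ℓ(n-1)+ℓ'`, so this says that the coefficient matrix kills the nonzero vector `(1, c, c², …)`.
-/

/-- The shifted Vandermonde determinant `Δ_λ(v) = det (v_i ^ (λ_j + N - j))`
(indices `j` one-based, so the exponent is `λ j + (N - 1 - j)` for zero-based `j`). -/
def shiftedVdm {R : Type*} [CommRing R] {N : ℕ} (lam : Fin N → ℕ) (v : Fin N → R) : R :=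
  Matrix.det (Matrix.of fun i j : Fin N => v i ^ (lam j + (N - 1 - (j : ℕ))))

/-- The Vandermonde product `Δ(v) = ∏_{i<j} (v i - v j)`. -/
def vdmProd {R : Type*} [CommRing R] {N : ℕ} (v : Fin N → R) : R :=
  ∏ i : Fin N, ∏ j ∈ Finset.Ioi i, (v i - v j)

/-- The 2-staircase partition `λ_{n,ℓ,ℓ'}` of length `2n`:
its `(2j-1)`-th part is `(n-j)ℓ + ℓ'` and its `(2j)`-th part is `(n-j)ℓ` (1-based). -/
def twoStaircase (n ℓ ℓ' : ℕ) : Fin (2 * n) → ℕ := fun t =>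
  if (t : ℕ) % 2 = 0 then (n - 1 - (t : ℕ) / 2) * ℓ + ℓ'
  else (n - ((t : ℕ) + 1) / 2) * ℓ

/-- The staircase partition `μ_{N,h} = ((N-1)h, (N-2)h, …, h, 0)`. -/
def staircasePart (N h : ℕ) : Fin N → ℕ := fun t => (N - 1 - (t : ℕ)) * h

/-- `exp(2πi/d)`. -/
noncomputable def qRoot (d : ℕ) : ℂ := Complex.exp (2 * Real.pi * Complex.I / (d : ℂ))

open MvPolynomial in
/-- The specialization of the `2n` variables sending the first `2n-2` of them to
`z_1,…,z_{2n-2}` and the last two to the polynomial variables `x` (inner) and `y` (outer)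
of `ℂ[z][x][y]`. -/
noncomputable def xySpec (n : ℕ) :
    Fin (2 * n) → Polynomial (Polynomial (MvPolynomial (Fin (2 * n - 2)) ℂ)) := fun v =>
  if hv : (v : ℕ) < 2 * n - 2 then Polynomial.C (Polynomial.C (X ⟨(v : ℕ), hv⟩))
  else if (v : ℕ) = 2 * n - 2 then Polynomial.C Polynomial.X
  else Polynomial.X

/-- `Q_{n,ℓ,ℓ'}(z)`: the determinant of the `(ℓ(n-1)+ℓ'+1) × (ℓ(n-1)+ℓ'+1)` matrix whose
`(i,j)` entry is the coefficient of `x^i y^j` in `S(z_1,…,z_{2n-2},x,y)`. -/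
noncomputable def Qdet (n ℓ ℓ' : ℕ) (S : MvPolynomial (Fin (2 * n)) ℂ) :
    MvPolynomial (Fin (2 * n - 2)) ℂ :=
  Matrix.det (Matrix.of fun i j : Fin (ℓ * (n - 1) + ℓ' + 1) =>
    ((MvPolynomial.aeval (xySpec n) S).coeff (j : ℕ)).coeff (i : ℕ))

open Polynomial

section Vandermonde

variable {R : Type*} [CommRing R] {N : ℕ}

theorem map_shiftedVdm {S F : Type*} [CommRing S] [FunLike F R S] [RingHomClass F R S] (f : F)
    (lam : Fin N → ℕ) (v : Fin N → R) :
    f (shiftedVdm lam v) = shiftedVdm lam (fun i => f (v i)) := by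
  rw [shiftedVdm, shiftedVdm, ← RingHom.coe_coe f, RingHom.map_det]
  congr 1
  ext i j
  simp

theorem map_vdmProd {S F : Type*} [CommRing S] [FunLike F R S] [RingHomClass F R S] (f : F)
    (v : Fin N → R) : f (vdmProd v) = vdmProd (fun i => f (v i)) := by
  simp only [vdmProd, map_prod, map_sub]

theorem shiftedVdm_eq_zero_of_pow_eq (lam : Fin N → ℕ) {v : Fin N → R} {i i' : Fin N}
    (hne : i ≠ i')
    (hpow : ∀ j : Fin N, v i ^ (lam j + (N - 1 - j)) = v i' ^ (lam j + (N - 1 - j))) :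
    shiftedVdm lam v = 0 :=
  Matrix.det_zero_of_row_eq hne (funext hpow)

theorem vdmProd_ne_zero [IsDomain R] {v : Fin N → R} (hv : Function.Injective v) :
    vdmProd v ≠ 0 :=
  Finset.prod_ne_zero_iff.mpr fun _ _ => Finset.prod_ne_zero_iff.mpr fun _ hj =>
    sub_ne_zero.mpr (hv.ne (Finset.mem_Ioi.mp hj).ne)

end Vandermonde

section Degree

variable {A : Type*} [CommRing A] {N : ℕ}

theorem natDegree_shiftedVdm_le (lam : Fin N → ℕ) {v : Fin N → A[X]} {i₁ : Fin N}
    (hconst : ∀ i ≠ i₁, ∃ a, v i = C a) (hX : v i₁ = X) {B : ℕ}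
    (hB : ∀ j : Fin N, lam j + (N - 1 - j) ≤ B) :
    (shiftedVdm lam v).natDegree ≤ B := by
  rw [shiftedVdm, Matrix.det_apply']
  refine natDegree_sum_le_of_forall_le _ _ fun σ _ => ?_
  have hfactor : ∀ j, (v (σ j) ^ (lam j + (N - 1 - j))).natDegree ≤
      if j = σ.symm i₁ then B else 0 := by
    intro j
    split_ifs with hj
    · rw [hj, Equiv.apply_symm_apply, hX]
      exact (natDegree_X_pow_le _).trans (hB _)
    · obtain ⟨a, ha⟩ := hconst (σ j) fun h => hj (by rw [← h, Equiv.symm_apply_apply])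
      rw [ha, ← C_pow, natDegree_C]
  refine (natDegree_mul_le_of_le (natDegree_intCast _).le (natDegree_prod_le _ _)).trans ?_
  simpa using Finset.sum_le_sum (s := Finset.univ) fun j _ => hfactor j

variable [IsDomain A]

theorem le_natDegree_vdmProd {v : Fin N → A[X]} (hv : Function.Injective v) {i₁ : Fin N}
    (hmax : ∀ i, i ≤ i₁) (hconst : ∀ i ≠ i₁, ∃ a, v i = C a) (hX : v i₁ = X) :
    N - 1 ≤ (vdmProd v).natDegree := by
  have hfac : ∀ i j, i < j → v i - v j ≠ 0 := fun i j h => sub_ne_zero.mpr (hv.ne h.ne)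
  have hrow : ∀ i ∈ Finset.univ.erase i₁, 1 ≤ (∏ j ∈ Finset.Ioi i, (v i - v j)).natDegree := by
    intro i hi
    have hlt : i < i₁ := lt_of_le_of_ne (hmax i) (Finset.ne_of_mem_erase hi)
    obtain ⟨a, ha⟩ := hconst i hlt.ne
    rw [natDegree_prod _ _ fun j hj => hfac i j (Finset.mem_Ioi.mp hj)]
    calc 1 = (v i - v i₁).natDegree := by
          rw [ha, hX, ← neg_sub, natDegree_neg, natDegree_X_sub_C]
      _ ≤ _ := Finset.single_le_sum (f := fun j => (v i - v j).natDegree)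
          (fun _ _ => Nat.zero_le _) (Finset.mem_Ioi.mpr hlt)
  calc N - 1 = (Finset.univ.erase i₁).card • 1 := by simp
    _ ≤ ∑ i ∈ Finset.univ.erase i₁, (∏ j ∈ Finset.Ioi i, (v i - v j)).natDegree :=
        Finset.card_nsmul_le_sum _ _ _ hrow
    _ ≤ ∑ i, (∏ j ∈ Finset.Ioi i, (v i - v j)).natDegree :=
        Finset.sum_le_sum_of_subset (Finset.erase_subset _ _)
    _ = (vdmProd v).natDegree := (natDegree_prod _ _ fun i _ =>
        Finset.prod_ne_zero_iff.mpr fun j hj => hfac i j (Finset.mem_Ioi.mp hj)).symm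

theorem natDegree_le_of_shiftedVdm_eq_mul (lam : Fin N → ℕ) {v : Fin N → A[X]}
    (hv : Function.Injective v) {i₁ : Fin N} (hmax : ∀ i, i ≤ i₁)
    (hconst : ∀ i ≠ i₁, ∃ a, v i = C a) (hX : v i₁ = X) {B : ℕ}
    (hB : ∀ j : Fin N, lam j + (N - 1 - j) ≤ B + (N - 1)) {P : A[X]}
    (hP : shiftedVdm lam v = P * vdmProd v) : P.natDegree ≤ B := by
  rcases eq_or_ne P 0 with rfl | hP0
  · simp
  have hupper := natDegree_shiftedVdm_le lam hconst hX hB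
  rw [hP, natDegree_mul hP0 (vdmProd_ne_zero hv)] at hupper
  have hlower := le_natDegree_vdmProd hv hmax hconst hX
  omega

theorem det_coeff_coeff_eq_zero_of_eval_C_eq_zero {D : ℕ} {P : A[X][X]} (hP : P.natDegree ≤ D)
    {c : A} (hc : P.eval (C c) = 0) :
    (Matrix.of fun i j : Fin (D + 1) => (P.coeff j).coeff i).det = 0 := by
  refine Matrix.exists_mulVec_eq_zero_iff.mp
    ⟨fun j => c ^ (j : ℕ), fun h => by simpa using congrFun h 0, ?_⟩
  ext i
  have h := congrArg (coeff · i) (eval_eq_sum_range' (Nat.lt_succ_of_le hP) (C c))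
  simp only [hc, coeff_zero, finsetSum_coeff, ← C_pow, coeff_mul_C] at h
  simp [Matrix.mulVec, dotProduct,
    Fin.sum_univ_eq_sum_range (fun j => (P.coeff j).coeff i * c ^ j), h]

end Degree

theorem MvPolynomial.X_ne_C_mul_X {σ K : Type*} [CommRing K] [Nontrivial K] (k k' : σ) {a : K}
    (ha : a ≠ 1) : (X k : MvPolynomial σ K) ≠ C a * X k' := by
  classical
  intro h
  have hcoeff := congrArg (coeff (Finsupp.single k 1)) h
  rcases eq_or_ne k' k with rfl | hk
  · exact ha (by simpa using hcoeff.symm)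
  · simp [hk] at hcoeff

section TwoStaircase

variable {n : ℕ} {ℓ ℓ' : ℕ}

theorem twoStaircase_add_eq (j : Fin (2 * n)) :
    twoStaircase n ℓ ℓ' j + (2 * n - 1 - j) =
      (n - 1 - j / 2) * (ℓ + 2) + if (j : ℕ) % 2 = 0 then ℓ' + 1 else 0 := by
  have hj := j.isLt
  unfold twoStaircase
  split_ifs with h
  · rw [show 2 * n - 1 - j = 2 * (n - 1 - j / 2) + 1 by omega]
    ring
  · rw [show n - (j + 1) / 2 = n - 1 - j / 2 by omega,
      show 2 * n - 1 - j = 2 * (n - 1 - j / 2) by omega]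
    ring

theorem dvd_twoStaircase_add {d : ℕ} (hd' : d ∣ ℓ' + 1) (hd : d ∣ ℓ + 2) (j : Fin (2 * n)) :
    d ∣ twoStaircase n ℓ ℓ' j + (2 * n - 1 - j) := by
  rw [twoStaircase_add_eq]
  split_ifs
  · exact dvd_add (hd.mul_left _) hd'
  · exact (hd.mul_left _).add (dvd_zero d)

theorem twoStaircase_add_le (j : Fin (2 * n)) :
    twoStaircase n ℓ ℓ' j + (2 * n - 1 - j) ≤ ℓ * (n - 1) + ℓ' + (2 * n - 1) := by
  have hj := j.isLt
  have hm : (n - 1 - j / 2) * (ℓ + 2) ≤ ℓ * (n - 1) + 2 * (n - 1) :=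
    calc (n - 1 - j / 2) * (ℓ + 2) ≤ (n - 1) * (ℓ + 2) := Nat.mul_le_mul_right _ (Nat.sub_le _ _)
      _ = ℓ * (n - 1) + 2 * (n - 1) := by ring
  rw [twoStaircase_add_eq]
  split_ifs <;> omega

end TwoStaircase

section XySpec

variable {n : ℕ}

theorem xySpec_of_lt {i : Fin (2 * n)} (h : (i : ℕ) < 2 * n - 2) :
    xySpec n i = C (C (MvPolynomial.X ⟨i, h⟩)) := by
  rw [xySpec, dif_pos h]

theorem xySpec_of_eq_sub_two {i : Fin (2 * n)} (h : (i : ℕ) = 2 * n - 2) :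
    xySpec n i = C X := by
  rw [xySpec, dif_neg (by omega), if_pos h]

theorem xySpec_of_eq_sub_one {i : Fin (2 * n)} (h : (i : ℕ) = 2 * n - 1) :
    xySpec n i = X := by
  have := i.isLt
  rw [xySpec, dif_neg (by omega), if_neg (by omega)]

theorem natDegree_le_of_shiftedVdm_xySpec_eq_mul (hn : 1 ≤ n) (lam : Fin (2 * n) → ℕ)
    (hinj : Function.Injective (xySpec n)) {B : ℕ}
    (hB : ∀ j : Fin (2 * n), lam j + (2 * n - 1 - j) ≤ B + (2 * n - 1))
    {P : (MvPolynomial (Fin (2 * n - 2)) ℂ)[X][X]}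
    (hP : shiftedVdm lam (xySpec n) = P * vdmProd (xySpec n)) : P.natDegree ≤ B := by
  refine natDegree_le_of_shiftedVdm_eq_mul lam hinj (i₁ := ⟨2 * n - 1, by omega⟩)
    (fun i => Fin.mk_le_mk.mpr (by omega)) (fun i hi => ?_) (xySpec_of_eq_sub_one rfl) hB hP
  have hi' : (i : ℕ) ≠ 2 * n - 1 := fun h => hi (Fin.ext h)
  have := i.isLt
  by_cases h : (i : ℕ) < 2 * n - 2
  · exact ⟨_, xySpec_of_lt h⟩
  · exact ⟨_, xySpec_of_eq_sub_two (by omega)⟩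

variable {ω : ℂ}

theorem injective_eval_xySpec (h₀ : 0 < 2 * n - 2) (hω : ω ≠ 1) :
    Function.Injective fun i =>
      (xySpec n i).eval (C (MvPolynomial.C ω * MvPolynomial.X ⟨0, h₀⟩)) := by
  intro i j hij
  by_contra hne
  wlog hlt : i < j generalizing i j
  · exact this hij.symm (Ne.symm hne) (lt_of_le_of_ne (not_lt.mp hlt) (Ne.symm hne))
  have hlt' : (i : ℕ) < j := hlt
  have hj := j.isLt
  simp only at hij
  rcases lt_trichotomy (j : ℕ) (2 * n - 2) with hj2 | hj2 | hj2
  · rw [xySpec_of_lt (hlt'.trans hj2), xySpec_of_lt hj2, eval_C, eval_C] at hij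
    exact hne (Fin.ext (Fin.mk.inj_iff.mp (MvPolynomial.X_injective (C_injective hij))))
  · rw [xySpec_of_lt (by omega), xySpec_of_eq_sub_two hj2, eval_C, eval_C] at hij
    exact X_ne_C _ hij.symm
  · rw [xySpec_of_eq_sub_one (i := j) (by omega), eval_X] at hij
    by_cases hi2 : (i : ℕ) < 2 * n - 2
    · rw [xySpec_of_lt hi2, eval_C] at hij
      exact MvPolynomial.X_ne_C_mul_X _ _ hω (C_injective hij)
    · rw [xySpec_of_eq_sub_two (by omega), eval_C] at hij
      exact X_ne_C _ hij

theorem shiftedVdm_eval_xySpec_eq_zero (h₀ : 0 < 2 * n - 2) (lam : Fin (2 * n) → ℕ)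
    (hω : ∀ j : Fin (2 * n), ω ^ (lam j + (2 * n - 1 - j)) = 1) :
    shiftedVdm lam
      (fun i => (xySpec n i).eval (C (MvPolynomial.C ω * MvPolynomial.X ⟨0, h₀⟩))) = 0 := by
  refine shiftedVdm_eq_zero_of_pow_eq lam (i := ⟨0, by omega⟩) (i' := ⟨2 * n - 1, by omega⟩)
    (fun h => by simp only [Fin.mk.injEq] at h; omega) fun j => ?_
  rw [xySpec_of_lt h₀, xySpec_of_eq_sub_one rfl, eval_C, eval_X, ← C_pow, ← C_pow, mul_pow,
    ← map_pow, hω, map_one, one_mul]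

end XySpec

open MvPolynomial in
theorem Qdet_eq_zero_of_gcd_gt_one_general (n ℓ ℓ' : ℕ) (hn : 2 ≤ n)
    (hgcd : 1 < Nat.gcd (ℓ' + 1) (ℓ + 2))
    (S : MvPolynomial (Fin (2 * n)) ℂ)
    (hS : shiftedVdm (twoStaircase n ℓ ℓ') (fun i => X i)
        = S * vdmProd (fun i => X i)) :
    Qdet n ℓ ℓ' S = 0 := by
  set d := Nat.gcd (ℓ' + 1) (ℓ + 2)
  have hω : IsPrimitiveRoot (qRoot d) d := Complex.isPrimitiveRoot_exp d (by omega)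
  have h₀ : 0 < 2 * n - 2 := by omega
  have hinj := injective_eval_xySpec h₀ (hω.ne_one hgcd)
  set P := MvPolynomial.aeval (xySpec n) S
  have hP : shiftedVdm (twoStaircase n ℓ ℓ') (xySpec n) = P * vdmProd (xySpec n) := by
    simpa [map_shiftedVdm, map_vdmProd] using congrArg (MvPolynomial.aeval (xySpec n)) hS
  have hvanish : P.eval (.C (MvPolynomial.C (qRoot d) * X ⟨0, h₀⟩)) = 0 := by
    have h := congrArg (Polynomial.evalRingHom (.C (MvPolynomial.C (qRoot d) * X ⟨0, h₀⟩))) hP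
    rw [map_shiftedVdm, map_mul _ P, map_vdmProd, Polynomial.coe_evalRingHom,
      shiftedVdm_eval_xySpec_eq_zero h₀ _ fun j => (hω.pow_eq_one_iff_dvd _).mpr
        (dvd_twoStaircase_add (Nat.gcd_dvd_left _ _) (Nat.gcd_dvd_right _ _) j)] at h
    exact (mul_eq_zero.mp h.symm).resolve_right (vdmProd_ne_zero hinj)
  exact det_coeff_coeff_eq_zero_of_eval_C_eq_zero
    (natDegree_le_of_shiftedVdm_xySpec_eq_mul (by omega) _ hinj.of_comp twoStaircase_add_le hP)
    hvanish

open MvPolynomial in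
/-- If `gcd(ℓ'+1, ℓ+2) > 1` and `n ≥ 2`, then `Q_{n,ℓ,ℓ'}(z) = 0` identically, where `S` is
the 2-staircase Schur polynomial `s_{λ_{n,ℓ,ℓ'}}` characterized by `Δ_λ = S * Δ`. -/
theorem Qdet_eq_zero_of_gcd_gt_one (n ℓ ℓ' : ℕ) (hn : 2 ≤ n) (hl : ℓ' ≤ ℓ)
    (hgcd : 1 < Nat.gcd (ℓ' + 1) (ℓ + 2))
    (S : MvPolynomial (Fin (2 * n)) ℂ)
    (hS : shiftedVdm (twoStaircase n ℓ ℓ') (fun i => X i)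
        = S * vdmProd (fun i => X i)) :
    Qdet n ℓ ℓ' S = 0 :=
  Qdet_eq_zero_of_gcd_gt_one_general n ℓ ℓ' hn hgcd S hS
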